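/- The Sorgenfrey line has the generalized Bolzano–Weierstrass property: if ℝ is equipped with the lower-limit topology (the topology generated by the half-open intervals [a,b) with a < b), then every sequence (Kₙ)_{n∈ℕ} of subsets of ℝ has a subsequence that converges in the sense of Kuratowski with respect to this topology. -/

import Mathlib

open Set Topology TopologicalSpace

/-- Lower closed limit (Kuratowski) of the subsequence of `K` indexed by the
infinite set `A ⊆ ℕ`, with respect to the topology `t`: points all of whose
open neighborhoods meet `K n` for all but finitely many `n ∈ A`. -/
def kurLi {X : Type*} (t : TopologicalSpace X) (K : ℕ → Set X) (A : Set ℕ) : Set X :=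
  {x | ∀ U : Set X, IsOpen[t] U → x ∈ U → {n ∈ A | U ∩ K n = ∅}.Finite}

/-- Upper closed limit (Kuratowski): points all of whose open neighborhoods
meet `K n` for infinitely many `n ∈ A`. -/
def kurLs {X : Type*} (t : TopologicalSpace X) (K : ℕ → Set X) (A : Set ℕ) : Set X :=
  {x | ∀ U : Set X, IsOpen[t] U → x ∈ U → {n ∈ A | (U ∩ K n).Nonempty}.Infinite}

/-- A family of subsets of `ℕ` is splitting if every infinite `A ⊆ ℕ` is split
by some member of the family. -/
def IsSplittingFamily (S : Set (Set ℕ)) : Prop :=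
  ∀ A : Set ℕ, A.Infinite → ∃ s ∈ S, (A ∩ s).Infinite ∧ (A \ s).Infinite

/-- The Sorgenfrey (lower-limit) topology on `ℝ`, generated by the half-open
intervals `[a, b)` with `a < b`. -/
def sorgenfreyTop : TopologicalSpace ℝ :=
  TopologicalSpace.generateFrom {s : Set ℝ | ∃ a b : ℝ, a < b ∧ s = Set.Ico a b}

/-!
Encode a set `s ⊆ ℝ` by the monotone function `x ↦ inf (s ∩ [x, ∞))` with values in `EReal`;
`s` meets `[x, c)` iff this infimum is `< c`. By Helly's selection theorem (a countable product
of compact first-countable spaces is sequentially compact, and a monotone limit is continuous off a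
countable set) some subsequence of the encodings of `Kₙ` converges at every point. If `x` lies in
the upper limit of that subsequence, the limit `l` at `x` is `≤ m` for every `m > x`, so for every
`c > x` eventually the infimum is `< c`, i.e. `Kₙ` meets `[x, c)`: `x` lies in the lower limit.
-/

open Filter

theorem kurLi_subset_kurLs {X : Type*} (t : TopologicalSpace X) (K : ℕ → Set X) {A : Set ℕ}
    (hA : A.Infinite) : kurLi t K A ⊆ kurLs t K A :=
  fun _ hx U hU hxU => (hA.sdiff (hx U hU hxU)).mono fun _ hn =>
    ⟨hn.1, nonempty_iff_ne_empty.2 fun h => hn.2 ⟨hn.1, h⟩⟩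

theorem sep_mem_range_eq_image {α β : Type*} (f : α → β) (p : β → Prop) :
    {b ∈ range f | p b} = f '' {a | p (f a)} :=
  (image_preimage_eq_range_inter (t := {b | p b})).symm

section Range

variable {X : Type*} {t : TopologicalSpace X} {K : ℕ → Set X} {σ : ℕ → ℕ}

theorem mem_kurLi_range_iff (hσ : σ.Injective) {x : X} :
    x ∈ kurLi t K (range σ) ↔
      ∀ U, IsOpen[t] U → x ∈ U → ∀ᶠ k in atTop, (U ∩ K (σ k)).Nonempty := by
  simp only [kurLi, mem_ofPred_eq, sep_mem_range_eq_image, finite_image_iff hσ.injOn,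
    ← Nat.cofinite_eq_atTop, eventually_cofinite, not_nonempty_iff_eq_empty]

theorem mem_kurLs_range_iff (hσ : σ.Injective) {x : X} :
    x ∈ kurLs t K (range σ) ↔
      ∀ U, IsOpen[t] U → x ∈ U → ∃ᶠ k in atTop, (U ∩ K (σ k)).Nonempty := by
  simp only [kurLs, mem_ofPred_eq, sep_mem_range_eq_image, infinite_image_iff hσ.injOn,
    ← Nat.cofinite_eq_atTop, frequently_cofinite_iff_infinite]

end Range

theorem sorgenfrey_isOpen_Ico {a b : ℝ} (hab : a < b) : IsOpen[sorgenfreyTop] (Ico a b) :=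
  GenerateOpen.basic _ ⟨a, b, hab, rfl⟩

theorem sorgenfrey_exists_Ico_subset {U : Set ℝ} (hU : IsOpen[sorgenfreyTop] U) {x : ℝ}
    (hx : x ∈ U) : ∃ c, x < c ∧ Ico x c ⊆ U := by
  induction hU generalizing x with
  | basic s hs =>
    obtain ⟨a, b, -, rfl⟩ := hs
    exact ⟨b, hx.2, fun z hz => ⟨hx.1.trans hz.1, hz.2⟩⟩
  | univ => exact ⟨x + 1, lt_add_one x, subset_univ _⟩
  | inter s u _ _ ihs ihu =>
    obtain ⟨c, hxc, hcs⟩ := ihs hx.1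
    obtain ⟨d, hxd, hdu⟩ := ihu hx.2
    exact ⟨min c d, lt_min hxc hxd, subset_inter
      ((Ico_subset_Ico_right (min_le_left c d)).trans hcs)
      ((Ico_subset_Ico_right (min_le_right c d)).trans hdu)⟩
  | sUnion C _ ih =>
    obtain ⟨s, hsC, hxs⟩ := hx
    obtain ⟨c, hxc, hcs⟩ := ih s hsC hxs
    exact ⟨c, hxc, hcs.trans (subset_sUnion_of_mem hsC)⟩

theorem exists_strictMono_tendsto_pi {ι α : Type*} [Countable ι] [TopologicalSpace α]
    [CompactSpace α] [FirstCountableTopology α] (f : ℕ → ι → α) :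
    ∃ g : ι → α, ∃ φ : ℕ → ℕ, StrictMono φ ∧ ∀ i, Tendsto (fun k => f (φ k) i) atTop (𝓝 (g i)) := by
  obtain ⟨g, φ, hφ, hg⟩ := SeqCompactSpace.tendsto_subseq f
  exact ⟨g, φ, hφ, tendsto_pi_nhds.1 hg⟩

section Helly

variable {α : Type*} [CompleteLinearOrder α] [TopologicalSpace α] [OrderTopology α]

theorem tendsto_of_tendsto_rat_of_continuousAt {ι : Type*} {F : Filter ι} {u : ι → ℝ → α}
    (hu : ∀ k, Monotone (u k)) {g : ℚ → α} (hg : ∀ q : ℚ, Tendsto (fun k => u k q) F (𝓝 (g q)))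
    {x : ℝ} (hx : ContinuousAt (fun y : ℝ => ⨆ (q : ℚ) (_ : (q : ℝ) < y), g q) x) :
    Tendsto (fun k => u k x) F (𝓝 (⨆ (q : ℚ) (_ : (q : ℝ) < x), g q)) := by
  rw [tendsto_order]
  constructor
  · intro a ha
    obtain ⟨q, hqx, haq⟩ := lt_biSup_iff.1 ha
    filter_upwards [(hg q).eventually (lt_mem_nhds haq)] with k hk
    exact hk.trans_le (hu k (le_of_lt hqx))
  · intro b hb
    obtain ⟨y, hyb, hxy⟩ := ((hx.eventually (gt_mem_nhds hb)).filter_mono nhdsWithin_le_nhds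
      |>.and (self_mem_nhdsWithin : Ioi x ∈ 𝓝[>] x)).exists
    obtain ⟨q, hxq, hqy⟩ := exists_rat_btwn hxy
    have hqb : g q < b := (le_biSup (fun q : ℚ => g q) hqy).trans_lt hyb
    filter_upwards [(hg q).eventually (gt_mem_nhds hqb)] with k hk
    exact (hu k hxq.le).trans_lt hk

/-- Helly's selection theorem. -/
theorem exists_strictMono_tendsto_of_monotone [SecondCountableTopology α] (f : ℕ → ℝ → α)
    (hf : ∀ n, Monotone (f n)) :
    ∃ σ : ℕ → ℕ, StrictMono σ ∧ ∀ x, ∃ l, Tendsto (fun k => f (σ k) x) atTop (𝓝 l) := by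
  obtain ⟨g, φ, hφ, hg⟩ := exists_strictMono_tendsto_pi fun n (q : ℚ) => f n q
  set G : ℝ → α := fun y => ⨆ (q : ℚ) (_ : (q : ℝ) < y), g q
  have hG : Monotone G := fun y z hyz => biSup_mono fun q hq => hq.trans_le hyz
  set D := {y | ¬ContinuousAt G y}
  have : Countable D := hG.countable_not_continuousAt.to_subtype
  obtain ⟨_, ψ, hψ, hD⟩ := exists_strictMono_tendsto_pi fun k (y : D) => f (φ k) y
  refine ⟨φ ∘ ψ, hφ.comp hψ, fun x => ?_⟩
  by_cases hx : x ∈ D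
  · exact ⟨_, hD ⟨x, hx⟩⟩
  · exact ⟨G x, tendsto_of_tendsto_rat_of_continuousAt (fun k => hf _)
      (fun q => (hg q).comp hψ.tendsto_atTop) (not_not.1 hx)⟩

end Helly

noncomputable def infFrom (s : Set ℝ) (x : ℝ) : EReal :=
  ⨅ y ∈ s ∩ Ici x, (y : EReal)

theorem monotone_infFrom (s : Set ℝ) : Monotone (infFrom s) :=
  fun _ _ hxy => biInf_mono fun _ hz => ⟨hz.1, hxy.trans hz.2⟩

theorem infFrom_lt_coe_iff {s : Set ℝ} {x c : ℝ} : infFrom s x < c ↔ (Ico x c ∩ s).Nonempty := by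
  simp only [infFrom, iInf_lt_iff, EReal.coe_lt_coe_iff, exists_prop, mem_inter_iff, mem_Ici,
    mem_Ico, Set.Nonempty]
  tauto

theorem eventually_nonempty_Ico_inter_of_tendsto {ι : Type*} {F : Filter ι} {L : ι → Set ℝ}
    {x : ℝ} {l : EReal} (hl : Tendsto (fun k => infFrom (L k) x) F (𝓝 l))
    (hfreq : ∀ c, x < c → ∃ᶠ k in F, (Ico x c ∩ L k).Nonempty) {c : ℝ} (hc : x < c) :
    ∀ᶠ k in F, (Ico x c ∩ L k).Nonempty := by
  obtain ⟨m, hxm, hmc⟩ := exists_between hc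
  have hlm : l ≤ m := by
    by_contra! hml
    obtain ⟨k, hk, hmk⟩ := ((hfreq m hxm).and_eventually (hl.eventually (lt_mem_nhds hml))).exists
    exact hmk.not_gt (infFrom_lt_coe_iff.2 hk)
  filter_upwards [hl.eventually (gt_mem_nhds (hlm.trans_lt (EReal.coe_lt_coe_iff.2 hmc)))]
    with k hk
  exact infFrom_lt_coe_iff.1 hk

/-- The Sorgenfrey line has the generalized Bolzano–Weierstrass property. -/
theorem stmt8 (K : ℕ → Set ℝ) :
    ∃ A : Set ℕ, A.Infinite ∧ kurLi sorgenfreyTop K A = kurLs sorgenfreyTop K A := by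
  obtain ⟨σ, hσ, hconv⟩ :=
    exists_strictMono_tendsto_of_monotone (fun n => infFrom (K n)) fun n => monotone_infFrom _
  have hA : (range σ).Infinite := infinite_range_of_injective hσ.injective
  refine ⟨range σ, hA, (kurLi_subset_kurLs _ _ hA).antisymm fun x hx => ?_⟩
  rw [mem_kurLs_range_iff hσ.injective] at hx
  rw [mem_kurLi_range_iff hσ.injective]
  intro U hU hxU
  obtain ⟨c, hxc, hcU⟩ := sorgenfrey_exists_Ico_subset hU hxU
  obtain ⟨l, hl⟩ := hconv x
  have hfreq := fun c (hc : x < c) => hx _ (sorgenfrey_isOpen_Ico hc) ⟨le_rfl, hc⟩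
  exact (eventually_nonempty_Ico_inter_of_tendsto hl hfreq hxc).mono fun _ hk =>
    hk.mono (inter_subset_inter_left _ hcU)
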